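/- arXiv:2501.16586 — 5 statements merged into one kernel-verified Lean document; each statement's English description precedes it below -/
import Mathlib

section
/- Every relation-preserving bijection θ of the structure H maps elements of the form inl X (finite sets) to elements of the form inl X', and maps inr (i, a) to either inr (i, false) or inr (i, true) (i.e., preserves the first coordinate of ℕ × Bool elements). -/
/-- Universe of the structure `H`. -/
abbrev HU : Type := Finset ℕ ⊕ (ℕ × Bool)

/-- The hypercube edge relations `E_i`. -/
def Erel (i : ℕ) : HU → HU → Prop
  | Sum.inl Y, Sum.inl Z => symmDiff Y Z = {i}
  | _, _ => False

/-- The directed edge relations `D_i`. -/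
def Drel (i : ℕ) : HU → HU → Prop
  | Sum.inl Y, Sum.inr p => p.1 = i ∧ (i ∈ Y ↔ p.2 = true)
  | _, _ => False

/-- The map `h_X`. -/
def hMap (X : Finset ℕ) : HU → HU
  | Sum.inl Y => Sum.inl (symmDiff X Y)
  | Sum.inr p => Sum.inr (p.1, xor p.2 (decide (p.1 ∈ X)))

/-- A bijection of `HU` is an automorphism of `H` if it preserves all relations
`E_i` and `D_i` in both directions. -/
def IsAuto (θ : Equiv.Perm HU) : Prop :=
  ∀ (i : ℕ) (u v : HU),
    (Erel i u v ↔ Erel i (θ u) (θ v)) ∧ (Drel i u v ↔ Drel i (θ u) (θ v))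

theorem auto_preserves_sorts (θ : Equiv.Perm HU) (hθ : IsAuto θ) :
    (∀ X : Finset ℕ, ∃ X' : Finset ℕ, θ (Sum.inl X) = Sum.inl X') ∧
    (∀ (i : ℕ) (a : Bool),
      θ (Sum.inr (i, a)) = Sum.inr (i, false) ∨ θ (Sum.inr (i, a)) = Sum.inr (i, true)) := by
  have part1 : ∀ X : Finset ℕ, ∃ X' : Finset ℕ, θ (Sum.inl X) = Sum.inl X' := by
    intro X
    have hE : Erel 0 (Sum.inl X) (Sum.inl (symmDiff X {0})) := by
      show symmDiff X (symmDiff X {0}) = {0}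
      simp [symmDiff_symmDiff_cancel_left]
    have hE' := ((hθ 0 (Sum.inl X) (Sum.inl (symmDiff X {0}))).1).mp hE
    cases h : θ (Sum.inl X) with
    | inl X' => exact ⟨X', rfl⟩
    | inr p => rw [h] at hE'; cases θ (Sum.inl (symmDiff X {0})) <;> exact absurd hE' (by simp [Erel])
  refine ⟨part1, fun i a => ?_⟩
  set Y : Finset ℕ := if a then {i} else ∅ with hY
  have hD : Drel i (Sum.inl Y) (Sum.inr (i, a)) := by
    constructor
    · rfl
    · cases a <;> simp [hY]
  have hD' := ((hθ i (Sum.inl Y) (Sum.inr (i, a))).2).mp hD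
  obtain ⟨Y', hY'⟩ := part1 Y
  rw [hY'] at hD'
  cases h : θ (Sum.inr (i, a)) with
  | inl Z => rw [h] at hD'; exact absurd hD' (by simp [Drel])
  | inr p =>
    rw [h] at hD'
    obtain ⟨h1, _⟩ := hD'
    obtain ⟨j, b⟩ := p
    simp only at h1
    subst h1
    cases b
    · exact Or.inl rfl
    · exact Or.inr rfl
end

section
/- If θ is an automorphism of the structure H with θ(inl ∅) = inl X, then θ = h_X. In particular, an automorphism of H is uniquely determined by the image of inl ∅. -/
theorem auto_determined_by_empty (θ : Equiv.Perm HU) (hθ : IsAuto θ)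
    (X : Finset ℕ) (hX : θ (Sum.inl ∅) = Sum.inl X) :
    ∀ u : HU, θ u = hMap X u := by
  have key : ∀ n (Y : Finset ℕ), Y.card = n → θ (Sum.inl Y) = Sum.inl (symmDiff X Y) := by
    intro n
    induction n with
    | zero =>
      intro Y hY
      rw [Finset.card_eq_zero.mp hY]
      have : symmDiff X (∅ : Finset ℕ) = X := by simp [symmDiff_def]
      rw [this, hX]
    | succ n ih =>
      intro Y hY
      obtain ⟨i, hi⟩ : Y.Nonempty := Finset.card_pos.mp (by omega)
      have hE : Erel i (Sum.inl (Y.erase i)) (Sum.inl Y) := by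
        show symmDiff (Y.erase i) Y = {i}
        ext x
        simp only [Finset.mem_symmDiff, Finset.mem_erase, Finset.mem_singleton]
        constructor
        · tauto
        · rintro rfl; tauto
      have h2 := (hθ i _ _).1.mp hE
      rw [ih (Y.erase i) (by rw [Finset.card_erase_of_mem hi, hY]; rfl)] at h2
      cases h3 : θ (Sum.inl Y) with
      | inr p => rw [h3] at h2; exact absurd h2 (by simp [Erel])
      | inl Z =>
        rw [h3] at h2
        have hZ : symmDiff (symmDiff X (Y.erase i)) Z = {i} := h2
        have : Z = symmDiff (symmDiff X (Y.erase i)) {i} := by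
          rw [← hZ, symmDiff_symmDiff_cancel_left]
        rw [this, symmDiff_assoc]
        congr 1
        ext x
        by_cases hxi : x = i
        · subst hxi; simp [Finset.mem_symmDiff, hi]
        · simp [Finset.mem_symmDiff, Finset.mem_erase, Finset.mem_singleton, hxi]
  intro u
  cases u with
  | inl Y => exact key Y.card Y rfl
  | inr p =>
    obtain ⟨i, a⟩ := p
    cases a with
    | false =>
      have hD : Drel i (Sum.inl (∅ : Finset ℕ)) (Sum.inr (i, false)) := by
        simp [Drel]
      have h2 := (hθ i _ _).2.mp hD
      rw [hX] at h2
      cases h3 : θ (Sum.inr (i, false)) with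
      | inl Z => rw [h3] at h2; exact absurd h2 (by simp [Drel])
      | inr q =>
        rw [h3] at h2
        obtain ⟨h4, h5⟩ := h2
        show Sum.inr q = Sum.inr (i, xor false (decide (i ∈ X)))
        congr 1
        obtain ⟨j, b⟩ := q
        simp only at h4 h5
        subst h4
        cases b <;> simp_all
    | true =>
      have hD : Drel i (Sum.inl ({i} : Finset ℕ)) (Sum.inr (i, true)) := by
        simp [Drel]
      have h2 := (hθ i _ _).2.mp hD
      rw [key 1 {i} (by simp)] at h2
      cases h3 : θ (Sum.inr (i, true)) with
      | inl Z => rw [h3] at h2; exact absurd h2 (by simp [Drel])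
      | inr q =>
        rw [h3] at h2
        obtain ⟨h4, h5⟩ := h2
        show Sum.inr q = Sum.inr (i, xor true (decide (i ∈ X)))
        congr 1
        obtain ⟨j, b⟩ := q
        simp only at h4 h5
        subst h4
        simp only [Finset.mem_symmDiff, Finset.mem_singleton] at h5
        cases b <;> simp_all
end

section
/- The automorphism group of the structure H is exactly {h_X : X ∈ Finset ℕ}; i.e., a bijection of Finset ℕ ⊕ (ℕ × Bool) is an automorphism of H if and only if it equals h_X for some finite set X of naturals. -/
theorem auto_iff_hMap (θ : Equiv.Perm HU) :
    IsAuto θ ↔ ∃ X : Finset ℕ, ∀ u : HU, θ u = hMap X u := by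
  constructor
  · intro h
    -- θ sends inl to inl
    have hinl : ∀ Y : Finset ℕ, ∃ Z, θ (Sum.inl Y) = Sum.inl Z := by
      intro Y
      have hd : Drel 0 (Sum.inl Y) (Sum.inr (0, decide (0 ∈ Y))) := by
        simp [Drel]
      have h2 := (h 0 _ _).2.mp hd
      rcases h' : θ (Sum.inl Y) with Z | p
      · exact ⟨Z, rfl⟩
      · rw [h'] at h2
        cases θ (Sum.inr (0, decide (0 ∈ Y))) <;> simp [Drel] at h2
    obtain ⟨X, hX0⟩ := hinl ∅
    have hY : ∀ Y : Finset ℕ, θ (Sum.inl Y) = Sum.inl (symmDiff X Y) := by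
      intro Y
      induction Y using Finset.induction_on with
      | empty =>
        rw [hX0]; congr 1
        rw [show (∅ : Finset ℕ) = ⊥ from rfl, symmDiff_bot]
      | @insert i Y hi ih =>
        have he : Erel i (Sum.inl Y) (Sum.inl (insert i Y)) := by
          show symmDiff Y (insert i Y) = {i}
          ext j
          simp only [Finset.mem_symmDiff, Finset.mem_insert, Finset.mem_singleton]
          constructor
          · rintro (⟨hj, hj2⟩ | ⟨hj, hj2⟩)
            · exact absurd (Or.inr hj) hj2
            · rcases hj with rfl | hj
              · rfl
              · exact absurd hj hj2
          · rintro rfl; exact Or.inr ⟨Or.inl rfl, hi⟩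
        have he2 := (h i _ _).1.mp he
        obtain ⟨Z, hZ⟩ := hinl (insert i Y)
        rw [ih, hZ] at he2
        have he3 : symmDiff (symmDiff X Y) Z = {i} := he2
        have hZeq : Z = symmDiff (symmDiff X Y) {i} := by
          have := congrArg (fun t => symmDiff (symmDiff X Y) t) he3
          simpa [symmDiff_symmDiff_cancel_left] using this
        rw [hZ, hZeq]
        congr 1
        have hins : insert i Y = symmDiff Y {i} := by
          ext j
          simp only [Finset.mem_symmDiff, Finset.mem_insert, Finset.mem_singleton]
          constructor
          · rintro (rfl | hj)
            · exact Or.inr ⟨rfl, hi⟩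
            · exact Or.inl ⟨hj, fun hj2 => hi (hj2 ▸ hj)⟩
          · rintro (⟨hj, _⟩ | ⟨rfl, _⟩)
            · exact Or.inr hj
            · exact Or.inl rfl
        rw [hins, symmDiff_assoc]
    -- θ sends inr to inr
    have hinr : ∀ p : ℕ × Bool, ∃ q, θ (Sum.inr p) = Sum.inr q := by
      intro p
      rcases h' : θ (Sum.inr p) with Z | q
      · exfalso
        obtain ⟨w, hw⟩ := θ.surjective (Sum.inr (0, decide (0 ∈ Z)))
        have hd : Drel 0 (θ (Sum.inr p)) (θ w) := by
          rw [h', hw]; simp [Drel]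
        have := (h 0 _ _).2.mpr hd
        cases w <;> simp [Drel] at this
      · exact ⟨q, rfl⟩
    refine ⟨X, ?_⟩
    intro u
    rcases u with Y | ⟨i, a⟩
    · exact hY Y
    · obtain ⟨⟨j, b⟩, hq⟩ := hinr (i, a)
      set Y : Finset ℕ := if a then {i} else ∅ with hYdef
      have hmem : i ∈ Y ↔ a = true := by
        cases a <;> simp [hYdef]
      have hd : Drel i (Sum.inl Y) (Sum.inr (i, a)) := ⟨rfl, hmem⟩
      have h2 := (h i _ _).2.mp hd
      rw [hY Y, hq] at h2
      obtain ⟨hji, hb⟩ := h2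
      simp only at hji hb
      subst hji
      rw [hq]
      simp only [hMap]
      congr 1
      have : j ∈ symmDiff X Y ↔ b = true := hb
      rw [Finset.mem_symmDiff] at this
      by_cases hx : j ∈ X <;> cases a <;> cases b <;> simp_all [hYdef]
  · rintro ⟨X, hX⟩ i u v
    rw [hX u, hX v]
    constructor
    · rcases u with Y | p <;> rcases v with Z | q <;> simp only [hMap, Erel]
      show symmDiff Y Z = {i} ↔ symmDiff (symmDiff X Y) (symmDiff X Z) = {i}
      have : symmDiff (symmDiff X Y) (symmDiff X Z) = symmDiff Y Z := by
        rw [symmDiff_symmDiff_symmDiff_comm, symmDiff_self]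
        simp
      rw [this]
    · rcases u with Y | p <;> rcases v with Z | ⟨j, a⟩ <;> simp only [hMap, Drel]
      constructor
      · rintro ⟨rfl, hm⟩
        refine ⟨rfl, ?_⟩
        rw [Finset.mem_symmDiff]
        by_cases hx : j ∈ X <;> by_cases hy : j ∈ Y <;> cases a <;> simp_all
      · rintro ⟨rfl, hm⟩
        refine ⟨rfl, ?_⟩
        rw [Finset.mem_symmDiff] at hm
        by_cases hx : j ∈ X <;> by_cases hy : j ∈ Y <;> cases a <;> simp_all
end

section
/- The automorphism group of the structure H is isomorphic, as a group, to the group of finite sets of naturals under symmetric difference (equivalently, to the direct sum of countably many copies of ℤ/2ℤ). In particular, the map X ↦ h_X is a group isomorphism from (Finset ℕ, △) onto Aut(H). -/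
lemma sd_cancel (X Y Z : Finset ℕ) :
    symmDiff (symmDiff X Y) (symmDiff X Z) = symmDiff Y Z := by
  ext i; simp [Finset.mem_symmDiff]; tauto

lemma hMap_invol (X : Finset ℕ) (u : HU) : hMap X (hMap X u) = u := by
  cases u with
  | inl Y => simp [hMap, symmDiff_symmDiff_cancel_left]
  | inr p => simp [hMap, Bool.xor_assoc]

def hEquiv (X : Finset ℕ) : Equiv.Perm HU :=
  ⟨hMap X, hMap X, hMap_invol X, hMap_invol X⟩

lemma mem_sd (X Y : Finset ℕ) (i : ℕ) :
    i ∈ symmDiff X Y ↔ ((i ∈ X ∧ i ∉ Y) ∨ (i ∈ Y ∧ i ∉ X)) := by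
  rw [Finset.mem_symmDiff]

lemma isAuto_hEquiv (X : Finset ℕ) : IsAuto (hEquiv X) := by
  intro i u v
  constructor
  · cases u with
    | inl Y => cases v with
      | inl Z =>
        show symmDiff Y Z = {i} ↔ symmDiff (symmDiff X Y) (symmDiff X Z) = {i}
        rw [sd_cancel]
      | inr p => exact Iff.rfl
    | inr p => cases v <;> exact Iff.rfl
  · cases u with
    | inl Y => cases v with
      | inl Z => exact Iff.rfl
      | inr p =>
        show (p.1 = i ∧ (i ∈ Y ↔ p.2 = true)) ↔
          (p.1 = i ∧ (i ∈ symmDiff X Y ↔ xor p.2 (decide (p.1 ∈ X)) = true))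
        constructor
        · rintro ⟨rfl, h2⟩
          refine ⟨rfl, ?_⟩
          rw [mem_sd]
          by_cases hx : p.1 ∈ X <;> cases hp : p.2 <;> simp_all
        · rintro ⟨rfl, h2⟩
          refine ⟨rfl, ?_⟩
          rw [mem_sd] at h2
          by_cases hx : p.1 ∈ X <;> cases hp : p.2 <;> simp_all
    | inr p => cases v <;> exact Iff.rfl

lemma auto_char (θ : Equiv.Perm HU) (h : IsAuto θ) (X : Finset ℕ)
    (hX : θ (Sum.inl ∅) = Sum.inl X) : ∀ u, θ u = hMap X u := by
  have A : ∀ Y : Finset ℕ, ∃ Z, θ (Sum.inl Y) = Sum.inl Z := by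
    intro Y
    have hE : Erel 0 (Sum.inl Y) (Sum.inl (symmDiff Y {0})) := by
      show symmDiff Y (symmDiff Y {0}) = {0}
      rw [symmDiff_symmDiff_cancel_left]
    have h2 := ((h 0 _ _).1).mp hE
    rcases hc : θ (Sum.inl Y) with Z | p
    · exact ⟨Z, rfl⟩
    · rw [hc] at h2; exact h2.elim
  have B : ∀ (i : ℕ) (b : Bool), ∃ b', θ (Sum.inr (i, b)) = Sum.inr (i, b') := by
    intro i b
    have hD : Drel i (Sum.inl (if b then {i} else ∅)) (Sum.inr (i, b)) := by
      refine ⟨rfl, ?_⟩; cases b <;> simp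
    have h2 := ((h i _ _).2).mp hD
    obtain ⟨Z, hZ⟩ := A (if b then {i} else ∅)
    rw [hZ] at h2
    rcases hc : θ (Sum.inr (i, b)) with W | p
    · rw [hc] at h2; exact h2.elim
    · rw [hc] at h2
      exact ⟨p.2, by rw [← h2.1]⟩
  have key : ∀ (i : ℕ) (Y Z : Finset ℕ), θ (Sum.inl Y) = Sum.inl Z →
      ∀ b', θ (Sum.inr (i, decide (i ∈ Y))) = Sum.inr (i, b') → (i ∈ Z ↔ b' = true) := by
    intro i Y Z hZ b' hb'
    have hD : Drel i (Sum.inl Y) (Sum.inr (i, decide (i ∈ Y))) := ⟨rfl, by simp⟩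
    have h2 := ((h i _ _).2).mp hD
    rw [hZ, hb'] at h2
    exact h2.2
  have main : ∀ Y : Finset ℕ, θ (Sum.inl Y) = Sum.inl (symmDiff X Y) := by
    intro Y
    obtain ⟨Z, hZ⟩ := A Y
    rw [hZ]
    congr 1
    ext i
    obtain ⟨b0, hb0⟩ := B i false
    obtain ⟨b1, hb1⟩ := B i true
    have hne : b1 ≠ b0 := by
      intro hc
      have := θ.injective (hb1.trans (hc ▸ hb0.symm))
      simp at this
    have hXi : i ∈ X ↔ b0 = true := key i ∅ X hX b0 (by simpa using hb0)
    have hZi : i ∈ Z ↔ (if i ∈ Y then b1 else b0) = true := by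
      refine key i Y Z hZ _ ?_
      by_cases hy : i ∈ Y <;> simp [hy, hb0, hb1]
    rw [mem_sd]
    by_cases hy : i ∈ Y <;> cases b0 <;> cases b1 <;> simp_all
  have mainr : ∀ (i : ℕ) (b : Bool),
      θ (Sum.inr (i, b)) = Sum.inr (i, xor b (decide (i ∈ X))) := by
    intro i b
    obtain ⟨b', hb'⟩ := B i b
    have hdec : decide (i ∈ (if b then ({i} : Finset ℕ) else ∅)) = b := by
      cases b <;> simp
    have hk := key i (if b then {i} else ∅) (symmDiff X (if b then {i} else ∅))
      (main _) b' (by rw [hdec]; exact hb')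
    rw [hb']
    congr 1
    rw [mem_sd] at hk
    by_cases hx : i ∈ X <;> cases b <;> cases hb'' : b' <;> simp_all
  intro u
  cases u with
  | inl Y => rw [main]; rfl
  | inr p => rw [mainr]; rfl

theorem autGroup_iso_finsets :
    ∃ e : Finset ℕ ≃ {θ : Equiv.Perm HU // IsAuto θ},
      (∀ X Y : Finset ℕ,
        ((e (symmDiff X Y) : Equiv.Perm HU)) = (e X : Equiv.Perm HU) * (e Y : Equiv.Perm HU)) ∧
      (∀ (X : Finset ℕ) (u : HU), (e X : Equiv.Perm HU) u = hMap X u) := by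
  refine ⟨{ toFun := fun X => ⟨hEquiv X, isAuto_hEquiv X⟩
            invFun := fun θ => Sum.elim id (fun _ => ∅) ((θ : Equiv.Perm HU) (Sum.inl ∅))
            left_inv := ?_
            right_inv := ?_ }, ?_, ?_⟩
  · intro X
    show Sum.elim id (fun _ => ∅) (hMap X (Sum.inl ∅)) = X
    simp [hMap]
  · rintro ⟨θ, hθ⟩
    rcases hc : θ (Sum.inl ∅) with Z | p
    · apply Subtype.ext
      apply Equiv.ext
      intro u
      show hMap (Sum.elim id (fun _ => ∅) (θ (Sum.inl ∅))) u = θ u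
      rw [hc]
      exact (auto_char θ hθ Z hc u).symm
    · exfalso
      have hE : Erel 0 (Sum.inl ∅) (Sum.inl (symmDiff ∅ {0})) := by
        show symmDiff (∅ : Finset ℕ) (symmDiff ∅ {0}) = {0}
        rw [symmDiff_symmDiff_cancel_left]
      have h2 := ((hθ 0 _ _).1).mp hE
      rw [hc] at h2
      exact h2
  · intro X Y
    apply Equiv.ext
    intro u
    show hMap (symmDiff X Y) u = hMap X (hMap Y u)
    cases u with
    | inl Z => show Sum.inl _ = Sum.inl _; rw [symmDiff_assoc]
    | inr p =>
      show Sum.inr _ = Sum.inr (p.1, _)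
      congr 1
      refine Prod.ext rfl ?_
      show xor p.2 (decide (p.1 ∈ symmDiff X Y)) = xor (xor p.2 (decide (p.1 ∈ Y))) (decide (p.1 ∈ X))
      have : p.1 ∈ symmDiff X Y ↔ ((p.1 ∈ X ∧ p.1 ∉ Y) ∨ (p.1 ∈ Y ∧ p.1 ∉ X)) := mem_sd X Y p.1
      by_cases hx : p.1 ∈ X <;> by_cases hy : p.1 ∈ Y <;> cases p.2 <;> simp_all
  · intro X u; rfl
end

section
/- Every automorphism of the structure H has order at most 2: for every automorphism θ of H, θ ∘ θ = id. -/
lemma aux_drel (i : ℕ) (a : Bool) :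
    Drel i (Sum.inl (if a then ({i} : Finset ℕ) else ∅)) (Sum.inr (i, a)) := by
  cases a <;> simp [Drel]

lemma maps_inl (θ : Equiv.Perm HU) (hθ : IsAuto θ) (Y : Finset ℕ) :
    ∃ Z, θ (Sum.inl Y) = Sum.inl Z := by
  have h := (hθ 0 (Sum.inl Y) (Sum.inr (0, decide (0 ∈ Y)))).2.mp (by simp [Drel])
  rcases hu : θ (Sum.inl Y) with Z | q
  · exact ⟨Z, rfl⟩
  · rw [hu] at h; cases hv : θ (Sum.inr (0, decide (0 ∈ Y))) <;> rw [hv] at h <;> exact absurd h (by simp [Drel])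

lemma maps_inr (θ : Equiv.Perm HU) (hθ : IsAuto θ) (p : ℕ × Bool) :
    ∃ q, θ (Sum.inr p) = Sum.inr q := by
  obtain ⟨i, a⟩ := p
  have h := (hθ i (Sum.inl (if a then ({i} : Finset ℕ) else ∅)) (Sum.inr (i, a))).2.mp (aux_drel i a)
  rcases hu : θ (Sum.inr (i, a)) with Z | q
  · rw [hu] at h
    cases hv : θ (Sum.inl (if a then ({i} : Finset ℕ) else ∅)) <;> rw [hv] at h <;>
      exact absurd h (by simp [Drel])
  · exact ⟨q, rfl⟩

lemma symmDiff_insert (i : ℕ) (Y : Finset ℕ) (hi : i ∉ Y) :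
    symmDiff Y (insert i Y) = ({i} : Finset ℕ) := by
  ext a
  simp only [Finset.mem_symmDiff, Finset.mem_insert, Finset.mem_singleton]
  constructor
  · rintro (⟨h1, h2⟩ | ⟨h1, h2⟩) <;> tauto
  · rintro rfl; tauto

lemma key_inl (θ : Equiv.Perm HU) (hθ : IsAuto θ) (X : Finset ℕ)
    (hX : θ (Sum.inl ∅) = Sum.inl X) (Y : Finset ℕ) :
    θ (Sum.inl Y) = Sum.inl (symmDiff X Y) := by
  induction Y using Finset.induction_on with
  | empty =>
    have h0 : symmDiff X (∅ : Finset ℕ) = X := by ext a; simp [Finset.mem_symmDiff]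
    rw [h0]; exact hX
  | @insert i Y hi ih =>
    have hE : Erel i (Sum.inl Y) (Sum.inl (insert i Y)) := symmDiff_insert i Y hi
    have h := (hθ i (Sum.inl Y) (Sum.inl (insert i Y))).1.mp hE
    obtain ⟨Z, hZ⟩ := maps_inl θ hθ (insert i Y)
    rw [ih, hZ] at h
    have hZ' : Z = symmDiff (symmDiff X Y) ({i} : Finset ℕ) := by
      have := symmDiff_symmDiff_cancel_left (symmDiff X Y) Z
      rw [h] at this
      rw [← this]
    rw [hZ, hZ']
    congr 1
    rw [symmDiff_assoc]
    congr 1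
    ext a
    simp only [Finset.mem_symmDiff, Finset.mem_singleton, Finset.mem_insert]
    constructor
    · rintro (⟨h1, h2⟩ | ⟨rfl, _⟩) <;> tauto
    · rintro (rfl | h)
      · exact Or.inr ⟨rfl, hi⟩
      · exact Or.inl ⟨h, fun e => hi (e ▸ h)⟩

lemma key_inr (θ : Equiv.Perm HU) (hθ : IsAuto θ) (X : Finset ℕ)
    (hX : θ (Sum.inl ∅) = Sum.inl X) (i : ℕ) (a : Bool) :
    θ (Sum.inr (i, a)) = Sum.inr (i, xor a (decide (i ∈ X))) := by
  set Y : Finset ℕ := if a then {i} else ∅ with hY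
  have h := (hθ i (Sum.inl Y) (Sum.inr (i, a))).2.mp (aux_drel i a)
  obtain ⟨q, hq⟩ := maps_inr θ hθ (i, a)
  rw [key_inl θ hθ X hX, hq] at h
  obtain ⟨h1, h2⟩ := h
  have hmem : i ∈ symmDiff X Y ↔ (xor a (decide (i ∈ X))) = true := by
    rw [Finset.mem_symmDiff]
    by_cases hx : i ∈ X <;> cases a <;> simp [hY, hx]
  rw [hq]
  congr 1
  refine Prod.ext h1 ?_
  have h3 := h2.symm.trans hmem
  cases hq2 : q.2 <;> cases ha : (xor a (decide (i ∈ X))) <;> simp_all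

theorem auto_order_two (θ : Equiv.Perm HU) (hθ : IsAuto θ) :
    ∀ u : HU, θ (θ u) = u := by
  obtain ⟨X, hX⟩ := maps_inl θ hθ ∅
  intro u
  match u with
  | Sum.inl Y =>
    rw [key_inl θ hθ X hX Y, key_inl θ hθ X hX, symmDiff_symmDiff_cancel_left]
  | Sum.inr (i, a) =>
    rw [key_inr θ hθ X hX, key_inr θ hθ X hX]
    congr 2
    cases a <;> cases hd : decide (i ∈ X) <;> simp
end
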